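/- Let (Ā, b̄, λ̄) ∈ ℝ^{m×n} × ℝ^m × ℝ₊₊, and let x̄ be the unique solution of the SR-LASSO with data (Ā, b̄, λ̄) such that, with I := supp(x̄), Āx̄ ≠ b̄ and ‖Ā_{I^C}ᵀ(b̄ − Āx̄)‖_∞ < λ̄‖Āx̄ − b̄‖₂. Suppose (A_k, b_k, λ_k) → (Ā, b̄, λ̄) with λ_k > 0, that x_k is a solution of the SR-LASSO with data (A_k, b_k, λ_k) for each k, and that x_k → x̄. Then supp(x_k) = supp(x̄) for all sufficiently large k. -/

import Mathlib

open Matrix Filter Topology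
open scoped BigOperators Classical

noncomputable def l2 {k : ℕ} (x : Fin k → ℝ) : ℝ := Real.sqrt (∑ i, (x i) ^ 2)

noncomputable def l1 {k : ℕ} (x : Fin k → ℝ) : ℝ := ∑ i, |x i|

noncomputable def linf {k : ℕ} (x : Fin k → ℝ) : ℝ := sSup (Set.range fun i => |x i|)

noncomputable def dotp {k : ℕ} (x y : Fin k → ℝ) : ℝ := ∑ i, x i * y i

noncomputable def pinv {m s : ℕ} (M : Matrix (Fin m) (Fin s) ℝ) :
    Matrix (Fin s) (Fin m) ℝ := (Mᵀ * M)⁻¹ * Mᵀ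

/-- The SR-LASSO objective f_{A,b,λ}(x) := ‖Ax − b‖₂ + λ‖x‖₁. -/
noncomputable def srObj {m n : ℕ} (A : Matrix (Fin m) (Fin n) ℝ) (b : Fin m → ℝ)
    (lam : ℝ) (x : Fin n → ℝ) : ℝ := l2 (A.mulVec x - b) + lam * l1 x

/-- x is a solution of the SR-LASSO with data (A, b, λ). -/
def IsSol {m n : ℕ} (A : Matrix (Fin m) (Fin n) ℝ) (b : Fin m → ℝ) (lam : ℝ)
    (x : Fin n → ℝ) : Prop := ∀ w : Fin n → ℝ, srObj A b lam x ≤ srObj A b lam w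

/-- y is feasible for the SR-LASSO dual: ‖Aᵀy‖_∞ ≤ λ and ‖y‖₂ ≤ 1. -/
noncomputable def DualFeas {m n : ℕ} (A : Matrix (Fin m) (Fin n) ℝ) (lam : ℝ)
    (y : Fin m → ℝ) : Prop := linf (Aᵀ.mulVec y) ≤ lam ∧ l2 y ≤ 1

/-- y is a solution of the SR-LASSO dual: it is feasible and maximizes ⟨b, ·⟩
over the feasible set. -/
noncomputable def IsDualSol {m n : ℕ} (A : Matrix (Fin m) (Fin n) ℝ) (b : Fin m → ℝ)
    (lam : ℝ) (y : Fin m → ℝ) : Prop :=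
  DualFeas A lam y ∧ ∀ y' : Fin m → ℝ, DualFeas A lam y' → dotp b y' ≤ dotp b y

/-! If `x` solves the SR-LASSO and `Ax ≠ b`, the objective is differentiable in each coordinate
`xᵢ ≠ 0`, so minimality along that coordinate forces `|(Aᵀ(b − Ax))ᵢ| = λ‖Ax − b‖₂`.
For `i ∉ supp x̄` the strict inequality at the limit data persists for large `k` by continuity,
so `(x_k)ᵢ = 0`; conversely `x_k → x̄` keeps the nonzero entries of `x̄` nonzero. -/
lemma l2_eq_norm {k : ℕ} (x : Fin k → ℝ) : l2 x = ‖WithLp.toLp 2 x‖ := by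
  simp [l2, EuclideanSpace.norm_eq]

lemma continuous_l2 {k : ℕ} : Continuous (l2 (k := k)) := by
  simp_rw [funext l2_eq_norm]
  exact continuous_norm.comp (PiLp.continuous_toLp 2 _)

lemma l2_pos {k : ℕ} {x : Fin k → ℝ} (hx : x ≠ 0) : 0 < l2 x := by
  simpa [l2_eq_norm] using hx

lemma l1_update {k : ℕ} (x : Fin k → ℝ) (i : Fin k) (t : ℝ) :
    l1 (Function.update x i t) = l1 x - |x i| + |t| := by
  have h : (fun j => |Function.update x i t j|) = Function.update (fun j => |x j|) i |t| :=
    funext fun j => Function.apply_update (fun _ => abs) x i t j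
  simp only [l1, h, Finset.sum_update_of_mem (Finset.mem_univ i),
    Finset.sum_eq_add_sum_sdiff_singleton_of_mem (Finset.mem_univ i) (fun j => |x j|)]
  ring

lemma mulVec_update_add {m k : ℕ} (A : Matrix (Fin m) (Fin k) ℝ) (x : Fin k → ℝ) (i : Fin k)
    (s : ℝ) : A *ᵥ Function.update x i (x i + s) = A *ᵥ x + s • Aᵀ i := by
  have hupdate : Function.update x i (x i + s) = x + s • Pi.single i 1 := by
    ext j; by_cases h : j = i <;> simp [h]
  rw [hupdate, mulVec_add, mulVec_smul, mulVec_single_one, col]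

lemma hasDerivAt_l2_add_smul {k : ℕ} {r : Fin k → ℝ} (hr : r ≠ 0) (c : Fin k → ℝ) :
    HasDerivAt (fun s : ℝ => l2 (r + s • c)) (dotp r c / l2 r) 0 := by
  have hq : HasDerivAt (fun s : ℝ => ∑ j, (r + s • c) j ^ 2) (∑ j, 2 * r j * c j) 0 := by
    refine HasDerivAt.fun_sum fun j _ => ?_
    simpa using (((hasDerivAt_id (0 : ℝ)).mul_const (c j)).const_add (r j)).fun_pow 2
  have hq0 : 0 < ∑ j, r j ^ 2 := Real.sqrt_pos.mp (l2_pos hr)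
  convert hq.sqrt (by simpa using hq0.ne') using 1
  · ext s; rfl
  simp only [zero_smul, add_zero, dotp, l2, mul_assoc, ← Finset.mul_sum]
  rw [mul_div_mul_left _ _ two_ne_zero]

lemma abs_eq_of_isLocalMin_add_mul_abs {φ : ℝ → ℝ} {d a lam : ℝ} (hφ : HasDerivAt φ d 0)
    (ha : a ≠ 0) (hmin : IsLocalMin (fun s => φ s + lam * |a + s|) 0) : |d| = |lam| := by
  have habs : HasDerivAt (fun s => |a + s|) (SignType.sign a : ℝ) 0 :=
    HasDerivAt.comp_const_add a 0 (by simpa using hasDerivAt_abs ha)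
  have hd : d + lam * SignType.sign a = 0 := hmin.hasDerivAt_eq_zero (hφ.add (habs.const_mul lam))
  rw [eq_neg_of_add_eq_zero_left hd, abs_neg, abs_mul]
  rcases ha.lt_or_gt with h | h <;> simp [sign_neg, sign_pos, h]

lemma transpose_mulVec_apply_eq_dotp {m k : ℕ} (A : Matrix (Fin m) (Fin k) ℝ) (v : Fin m → ℝ)
    (i : Fin k) : (Aᵀ *ᵥ v) i = dotp v (Aᵀ i) := by
  simp [mulVec, dotProduct, dotp, mul_comm]

lemma IsSol.abs_transpose_mulVec_eq {m k : ℕ} {A : Matrix (Fin m) (Fin k) ℝ} {b : Fin m → ℝ}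
    {lam : ℝ} {x : Fin k → ℝ} (hx : IsSol A b lam x) (hlam : 0 ≤ lam) (hr : A *ᵥ x - b ≠ 0)
    {i : Fin k} (hi : x i ≠ 0) :
    |(Aᵀ *ᵥ (b - A *ᵥ x)) i| = lam * l2 (A *ᵥ x - b) := by
  set r := A *ᵥ x - b
  have hobj : ∀ s, srObj A b lam (Function.update x i (x i + s))
      = (l2 (r + s • Aᵀ i) + lam * (l1 x - |x i|)) + lam * |x i + s| := by
    intro s
    rw [srObj, mulVec_update_add, l1_update, add_sub_right_comm]
    ring
  have hmin : IsLocalMin (fun s => srObj A b lam (Function.update x i (x i + s))) 0 :=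
    IsMinOn.isLocalMin (fun s _ => by simpa using hx (Function.update x i (x i + s)))
      univ_mem
  rw [funext hobj] at hmin
  have hstat := abs_eq_of_isLocalMin_add_mul_abs
    ((hasDerivAt_l2_add_smul hr (Aᵀ i)).add_const _) hi hmin
  have hpos := l2_pos hr
  rw [abs_div, abs_of_pos hpos, abs_of_nonneg hlam, div_eq_iff hpos.ne'] at hstat
  rw [← neg_sub, mulVec_neg, Pi.neg_apply, abs_neg, transpose_mulVec_apply_eq_dotp, hstat]

theorem Filter.Tendsto.matrix_mulVec {α R m n : Type*} [TopologicalSpace R]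
    [NonUnitalNonAssocSemiring R] [ContinuousAdd R] [ContinuousMul R] [Fintype n]
    {l : Filter α} {A : α → Matrix m n R} {x : α → n → R} {A₀ : Matrix m n R} {x₀ : n → R}
    (hA : Tendsto A l (𝓝 A₀)) (hx : Tendsto x l (𝓝 x₀)) :
    Tendsto (fun k => A k *ᵥ x k) l (𝓝 (A₀ *ᵥ x₀)) :=
  ((continuous_fst.matrix_mulVec continuous_snd).tendsto (A₀, x₀)).comp (hA.prodMk_nhds hx)

theorem Filter.Tendsto.eventually_support_subset {α ι M : Type*} [Finite ι] [TopologicalSpace M]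
    [T1Space M] [Zero M] {l : Filter α} {f : α → ι → M} {g : ι → M} (h : Tendsto f l (𝓝 g)) :
    ∀ᶠ k in l, Function.support g ⊆ Function.support (f k) :=
  (Set.toFinite _).eventually_all.2 fun i hi => (tendsto_pi_nhds.1 h i).eventually_ne hi

lemma IsSol.support_subset {m k : ℕ} {A : Matrix (Fin m) (Fin k) ℝ} {b : Fin m → ℝ}
    {lam : ℝ} {x : Fin k → ℝ} (hx : IsSol A b lam x) (hlam : 0 ≤ lam) (hr : A *ᵥ x - b ≠ 0)
    {S : Set (Fin k)} (hS : ∀ i ∉ S, |(Aᵀ *ᵥ (b - A *ᵥ x)) i| < lam * l2 (A *ᵥ x - b)) :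
    Function.support x ⊆ S := fun i hi => by
  by_contra hiS
  exact (hS i hiS).ne (hx.abs_transpose_mulVec_eq hlam hr hi)

theorem stmt_16_general {m n : ℕ} (Abar : Matrix (Fin m) (Fin n) ℝ) (bbar : Fin m → ℝ)
    (lambar : ℝ) (xbar : Fin n → ℝ)
    (hres : Abar.mulVec xbar ≠ bbar)
    (hii : ∀ i, xbar i = 0 →
      |Abarᵀ.mulVec (bbar - Abar.mulVec xbar) i|
        < lambar * l2 (Abar.mulVec xbar - bbar))
    (Ak : ℕ → Matrix (Fin m) (Fin n) ℝ) (bk : ℕ → Fin m → ℝ) (lamk : ℕ → ℝ)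
    (hlamk : ∀ k, 0 < lamk k)
    (hAk : Filter.Tendsto Ak Filter.atTop (nhds Abar))
    (hbk : Filter.Tendsto bk Filter.atTop (nhds bbar))
    (hlk : Filter.Tendsto lamk Filter.atTop (nhds lambar))
    (xk : ℕ → Fin n → ℝ)
    (hxk : ∀ k, IsSol (Ak k) (bk k) (lamk k) (xk k))
    (hxlim : Filter.Tendsto xk Filter.atTop (nhds xbar)) :
    ∀ᶠ k in Filter.atTop,
      {i : Fin n | xk k i ≠ 0} = {i : Fin n | xbar i ≠ 0} := by
  have hAx := hAk.matrix_mulVec hxlim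
  have hres_lim := hAx.sub hbk
  have hcorr_lim := ((continuous_id.matrix_transpose.tendsto _).comp hAk).matrix_mulVec
    (hbk.sub hAx)
  have hres_ne : ∀ᶠ k in atTop, Ak k *ᵥ xk k - bk k ≠ 0 :=
    hres_lim.eventually_ne (sub_ne_zero.mpr hres)
  have hstrict : ∀ᶠ k in atTop, ∀ i ∉ Function.support xbar,
      |((Ak k)ᵀ *ᵥ (bk k - Ak k *ᵥ xk k)) i| < lamk k * l2 (Ak k *ᵥ xk k - bk k) :=
    (Set.toFinite _).eventually_all.2 fun i hi =>
      (tendsto_pi_nhds.1 hcorr_lim i).abs.eventually_lt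
        (hlk.mul ((continuous_l2.tendsto _).comp hres_lim))
        (hii i (Function.notMem_support.1 hi))
  filter_upwards [hxlim.eventually_support_subset, hres_ne, hstrict] with k hsub hrk hstk
  exact ((hxk k).support_subset (hlamk k).le hrk hstk).antisymm hsub

/-- constancy of support: if x̄ is the unique solution for
(Ā, b̄, λ̄) with Āx̄ ≠ b̄ and ‖Ā_{I^C}ᵀ(b̄ − Āx̄)‖_∞ < λ̄‖Āx̄ − b̄‖₂ where
I := supp(x̄), and (Aₖ, bₖ, λₖ) → (Ā, b̄, λ̄) with solutions xₖ → x̄, then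
supp(xₖ) = supp(x̄) for all large k. -/
theorem stmt_16 {m n : ℕ} (Abar : Matrix (Fin m) (Fin n) ℝ) (bbar : Fin m → ℝ)
    (lambar : ℝ) (hlam : 0 < lambar) (xbar : Fin n → ℝ)
    (hsol : IsSol Abar bbar lambar xbar)
    (huniq : ∀ x : Fin n → ℝ, IsSol Abar bbar lambar x → x = xbar)
    (hres : Abar.mulVec xbar ≠ bbar)
    (hii : ∀ i, xbar i = 0 →
      |Abarᵀ.mulVec (bbar - Abar.mulVec xbar) i|
        < lambar * l2 (Abar.mulVec xbar - bbar))
    (Ak : ℕ → Matrix (Fin m) (Fin n) ℝ) (bk : ℕ → Fin m → ℝ) (lamk : ℕ → ℝ)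
    (hlamk : ∀ k, 0 < lamk k)
    (hAk : Filter.Tendsto Ak Filter.atTop (nhds Abar))
    (hbk : Filter.Tendsto bk Filter.atTop (nhds bbar))
    (hlk : Filter.Tendsto lamk Filter.atTop (nhds lambar))
    (xk : ℕ → Fin n → ℝ)
    (hxk : ∀ k, IsSol (Ak k) (bk k) (lamk k) (xk k))
    (hxlim : Filter.Tendsto xk Filter.atTop (nhds xbar)) :
    ∀ᶠ k in Filter.atTop,
      {i : Fin n | xk k i ≠ 0} = {i : Fin n | xbar i ≠ 0} :=
  stmt_16_general Abar bbar lambar xbar hres hii Ak bk lamk hlamk hAk hbk hlk xk hxk hxlim
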